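/- Under the hypotheses that the restricted stationarity equation ∇g_L(φ_L(D_L)) = D_Lᵀ(x - D_L φ_L(D_L)) holds along a differentiable curve of dictionaries, the derivative of the sparse solution satisfies the linear equation K(D_L)·Dφ_L(D_L)H = Hᵀx - (HᵀD_L + D_LᵀH)φ_L, and hence Dφ_L(D_L)H = K(D_L)⁻¹(Hᵀx - (HᵀD_L + D_LᵀH)φ_L), where K(D_L) = Hg_L(φ_L) + D_LᵀD_L is positive definite. -/

import Mathlib

/-!
Both sides of the stationarity equation are differentiable in `t` at `0`: the left side by the
chain rule, coordinate by coordinate, the right side by the product rule for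
`(D + tH)ᵀ(x - (D + tH)φ(t))`.
Equating the two derivatives and moving `D_LᵀD_L φ'` to the left gives the linear equation.
`K` is a positive diagonal matrix plus the Gram matrix `D_LᵀD_L`, hence positive definite and
invertible, which solves for `φ'`.
-/

namespace Matrix

variable {𝕜 : Type*} [NontriviallyNormedField 𝕜] {m n : Type*} [Fintype n]

theorem hasDerivAt_mulVec {A : 𝕜 → Matrix m n 𝕜} {A' : Matrix m n 𝕜} {v : 𝕜 → n → 𝕜}
    {v' : n → 𝕜} {t : 𝕜} (hA : ∀ i j, HasDerivAt (fun s => A s i j) (A' i j) t)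
    (hv : HasDerivAt v v' t) :
    HasDerivAt (fun s => A s *ᵥ v s) (A' *ᵥ v t + A t *ᵥ v') t := by
  rw [hasDerivAt_pi] at hv ⊢
  intro i
  have := HasDerivAt.fun_sum (u := Finset.univ) fun j _ => (hA i j).fun_mul (hv j)
  simpa [mulVec, dotProduct, Finset.sum_add_distrib] using this

theorem hasDerivAt_add_smul_mulVec (A B : Matrix m n 𝕜) {v : 𝕜 → n → 𝕜} {v' : n → 𝕜} {t : 𝕜}
    (hv : HasDerivAt v v' t) :
    HasDerivAt (fun s => (A + s • B) *ᵥ v s) (B *ᵥ v t + (A + t • B) *ᵥ v') t :=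
  hasDerivAt_mulVec
    (fun i j => by simpa using ((hasDerivAt_id t).smul_const (B i j)).const_add (A i j)) hv

theorem hasDerivAt_separable_comp [DecidableEq n] {f : n → 𝕜 → 𝕜} {d : n → 𝕜} {v : 𝕜 → n → 𝕜}
    {v' : n → 𝕜} {t : 𝕜}
    (hf : ∀ i, HasDerivAt (f i) (d i) (v t i)) (hv : HasDerivAt v v' t) :
    HasDerivAt (fun s i => f i (v s i)) (diagonal d *ᵥ v') t := by
  rw [hasDerivAt_pi] at hv ⊢
  intro i
  rw [mulVec_diagonal]
  exact (hf i).comp t (hv i)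

theorem posDef_diagonal_add_conjTranspose_mul_self {R : Type*} [CommRing R] [PartialOrder R]
    [StarRing R] [StarOrderedRing R] [NoZeroDivisors R] [Fintype m] [DecidableEq n] {d : n → R}
    (hd : ∀ i, 0 < d i) (A : Matrix m n R) : (diagonal d + Aᴴ * A).PosDef :=
  (PosDef.diagonal hd).add_posSemidef (posSemidef_conjTranspose_mul_self A)

theorem hasDerivAt_transpose_mulVec_residual [Fintype m] (D H : Matrix m n 𝕜) (x : m → 𝕜)
    {φ : 𝕜 → n → 𝕜} {φ' : n → 𝕜} (hφ : HasDerivAt φ φ' 0) :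
    HasDerivAt (fun t => (D + t • H)ᵀ *ᵥ (x - (D + t • H) *ᵥ φ t))
      (Hᵀ *ᵥ x - (Hᵀ * D + Dᵀ * H) *ᵥ φ 0 - (Dᵀ * D) *ᵥ φ') 0 := by
  have hres := (hasDerivAt_add_smul_mulVec D H hφ).const_sub x
  simp only [transpose_add, transpose_smul]
  convert hasDerivAt_add_smul_mulVec Dᵀ Hᵀ hres using 1
  simp only [zero_smul, add_zero, mulVec_sub, mulVec_neg, mulVec_add, add_mulVec, mulVec_mulVec]
  abel

end Matrix

open Matrix

theorem sparse_solution_derivative_general (m k : ℕ) (DL H : Matrix (Fin m) (Fin k) ℝ)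
    (x : Fin m → ℝ) (g' g'' : Fin k → ℝ → ℝ)
    (hd2 : ∀ i t, t ≠ 0 → HasDerivAt (g' i) (g'' i t) t)
    (hpos : ∀ i t, t ≠ 0 → 0 < g'' i t)
    (φ : ℝ → Fin k → ℝ) (hφ0 : ∀ i, φ 0 i ≠ 0)
    (φ' : Fin k → ℝ) (hdφ : ∀ i, HasDerivAt (fun t => φ t i) (φ' i) 0)
    (hstat : ∀ t : ℝ, ∀ i, g' i (φ t i) =
      (fun j => (DL + t • H) j i) ⬝ᵥ (x - (DL + t • H).mulVec (φ t))) :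
    (Matrix.diagonal (fun i => g'' i (φ 0 i)) + DLᵀ * DL).PosDef ∧
    (Matrix.diagonal (fun i => g'' i (φ 0 i)) + DLᵀ * DL).mulVec φ' =
      Hᵀ.mulVec x - (Hᵀ * DL + DLᵀ * H).mulVec (φ 0) ∧
    φ' = (Matrix.diagonal (fun i => g'' i (φ 0 i)) + DLᵀ * DL)⁻¹.mulVec
      (Hᵀ.mulVec x - (Hᵀ * DL + DLᵀ * H).mulVec (φ 0)) := by
  have hK : (diagonal (fun i => g'' i (φ 0 i)) + DLᵀ * DL).PosDef := by
    simpa only [conjTranspose_eq_transpose_of_trivial] using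
      posDef_diagonal_add_conjTranspose_mul_self (fun i => hpos i _ (hφ0 i)) DL
  have hφ : HasDerivAt φ φ' 0 := hasDerivAt_pi.2 hdφ
  have hstat_vec : (fun t i => g' i (φ t i)) =
      fun t => (DL + t • H)ᵀ *ᵥ (x - (DL + t • H) *ᵥ φ t) :=
    funext fun t => funext (hstat t)
  have hlhs := hasDerivAt_separable_comp (fun i => hd2 i _ (hφ0 i)) hφ
  rw [hstat_vec] at hlhs
  have hsolve := hlhs.unique (hasDerivAt_transpose_mulVec_residual DL H x hφ)
  have hmain : (diagonal (fun i => g'' i (φ 0 i)) + DLᵀ * DL) *ᵥ φ' =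
      Hᵀ *ᵥ x - (Hᵀ * DL + DLᵀ * H) *ᵥ φ 0 := by
    rw [add_mulVec, hsolve, sub_add_cancel]
  let _ := hK.isUnit.invertible
  exact ⟨hK, hmain, (inv_mulVec_eq_vec hmain.symm).symm⟩

/-- Differentiating the stationarity equation of the sparse solution along a curve
of dictionaries `t ↦ D_L + tH` yields
`K(D_L)·Dφ_L(D_L)H = Hᵀx - (HᵀD_L + D_LᵀH)φ_L`, hence
`Dφ_L(D_L)H = K(D_L)⁻¹(Hᵀx - (HᵀD_L + D_LᵀH)φ_L)`,
where `K(D_L) = Hg_L(φ_L) + D_LᵀD_L` is positive definite. -/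
theorem sparse_solution_derivative (m k : ℕ) (DL H : Matrix (Fin m) (Fin k) ℝ)
    (x : Fin m → ℝ) (g g' g'' : Fin k → ℝ → ℝ)
    (hd1 : ∀ i t, t ≠ 0 → HasDerivAt (g i) (g' i t) t)
    (hd2 : ∀ i t, t ≠ 0 → HasDerivAt (g' i) (g'' i t) t)
    (hpos : ∀ i t, t ≠ 0 → 0 < g'' i t)
    (φ : ℝ → Fin k → ℝ) (hφ0 : ∀ i, φ 0 i ≠ 0)
    (φ' : Fin k → ℝ) (hdφ : ∀ i, HasDerivAt (fun t => φ t i) (φ' i) 0)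
    (hstat : ∀ t : ℝ, ∀ i, g' i (φ t i) =
      (fun j => (DL + t • H) j i) ⬝ᵥ (x - (DL + t • H).mulVec (φ t))) :
    (Matrix.diagonal (fun i => g'' i (φ 0 i)) + DLᵀ * DL).PosDef ∧
    (Matrix.diagonal (fun i => g'' i (φ 0 i)) + DLᵀ * DL).mulVec φ' =
      Hᵀ.mulVec x - (Hᵀ * DL + DLᵀ * H).mulVec (φ 0) ∧
    φ' = (Matrix.diagonal (fun i => g'' i (φ 0 i)) + DLᵀ * DL)⁻¹.mulVec
      (Hᵀ.mulVec x - (Hᵀ * DL + DLᵀ * H).mulVec (φ 0)) :=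
  sparse_solution_derivative_general m k DL H x g' g'' hd2 hpos φ hφ0 φ' hdφ hstat
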